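/- arXiv:1903.10875 — 4 statements merged into one kernel-verified Lean document; each statement's English description precedes it below -/
import Mathlib

section
/- Let Φ : ℂ^N → ℂ^M be a map, let x ∈ ℂ^N be s-sparse, let ε ∈ ℂ^M, and set y = Φ(x) + ε. For each n ≥ 0 let Φ_{x_n} be an M×N complex matrix each of whose columns has unit ℓ² norm, and suppose μ(Φ_{x_n}) ≤ μ₀ for all n, where μ₀ < 1/(3s+1). Define the iterates x_{n+1} = H_s( x_n + Φ_{x_n}^* ( y − Φ_{x_n} x_n ) ). Then for every n ≥ 0, ‖x_{n+1} − x‖₁ ≤ ρ ‖x_n − x‖₁ + (3s+1) ‖Φ_{x_n}^* e_n‖_∞, where e_n = Φ(x) − Φ_{x_n} x + ε and ρ = μ₀(3s+1). -/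
open Matrix Finset Filter

noncomputable section

/-- A vector is `s`-sparse if it has at most `s` nonzero entries. -/
def sparse {n : Type*} (s : ℕ) (x : n → ℂ) : Prop := {i | x i ≠ 0}.ncard ≤ s

/-- The ℓ² norm of the `j`-th column of a matrix. -/
def colNorm {m n : Type*} [Fintype m] (A : Matrix m n ℂ) (j : n) : ℝ :=
  Real.sqrt (∑ i, ‖A i j‖ ^ 2)

/-- The mutual coherence of a matrix:
`μ(A) = max_{j ≠ k} |⟨A_j, A_k⟩| / (‖A_j‖₂ ‖A_k‖₂)`. -/
def coherence {m n : Type*} [Fintype m] [Fintype n] (A : Matrix m n ℂ) : ℝ :=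
  sSup {r : ℝ | ∃ j k, j ≠ k ∧ r = ‖(Aᴴ * A) j k‖ / (colNorm A j * colNorm A k)}

/-- The ℓ¹ norm of a vector. -/
def l1 {n : Type*} [Fintype n] (x : n → ℂ) : ℝ := ∑ i, ‖x i‖

/-- The ℓ^∞ norm of a vector. -/
def linf {n : Type*} [Fintype n] (x : n → ℂ) : ℝ := ⨆ i, ‖x i‖

/-- The squared ℓ² norm of a vector. -/
def l2sq {n : Type*} [Fintype n] (x : n → ℂ) : ℝ := ∑ i, ‖x i‖ ^ 2

/-- The entrywise max norm of a matrix, `‖M‖_max = max_{i,j} |M_{ij}|`. -/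
def maxNorm {m n : Type*} [Fintype m] [Fintype n] (A : Matrix m n ℂ) : ℝ :=
  ⨆ p : m × n, ‖A p.1 p.2‖

/-- The induced ℓ¹ matrix norm (maximum absolute column sum). -/
def matL1 {m n : Type*} [Fintype m] [Fintype n] (A : Matrix m n ℂ) : ℝ :=
  ⨆ j, ∑ i, ‖A i j‖

/-- `x` is a hard thresholding `H_s(z)` of `z`: it agrees with `z` on an
index set `I` of size `s` consisting of entries of largest modulus, and
vanishes outside `I`. -/
def IsHardThreshold {n : Type*} [Fintype n] (s : ℕ) (z x : n → ℂ) : Prop :=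
  ∃ I : Finset n, I.card = s ∧ (∀ i ∈ I, ∀ j ∉ I, ‖z j‖ ≤ ‖z i‖) ∧
    (∀ i ∈ I, x i = z i) ∧ (∀ i ∉ I, x i = 0)

/-- `A` satisfies the restricted isometry property of order `t` with constant `δ`. -/
def SatisfiesRIP {m n : Type*} [Fintype m] [Fintype n] (A : Matrix m n ℂ) (t : ℕ) (δ : ℝ) :
    Prop :=
  0 < δ ∧ δ < 1 ∧ ∀ z : n → ℂ, sparse t z →
    (1 - δ) * l2sq z ≤ l2sq (A.mulVec z) ∧ l2sq (A.mulVec z) ≤ (1 + δ) * l2sq z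

/-- The spectral (operator ℓ²) norm of a square matrix. -/
def specNorm {n : Type*} [Fintype n] [DecidableEq n] (M : Matrix n n ℂ) : ℝ :=
  ‖Matrix.toEuclideanCLM (𝕜 := ℂ) M‖


lemma coherence_set_bddAbove {M N : ℕ} (A : Matrix (Fin M) (Fin N) ℂ) :
    BddAbove {r : ℝ | ∃ j k, j ≠ k ∧ r = ‖(Aᴴ * A) j k‖ / (colNorm A j * colNorm A k)} := by
  apply Set.Finite.bddAbove
  apply Set.Finite.subset (Set.finite_range fun p : Fin N × Fin N =>
    ‖(Aᴴ * A) p.1 p.2‖ / (colNorm A p.1 * colNorm A p.2))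
  rintro r ⟨j, k, -, rfl⟩
  exact ⟨(j, k), rfl⟩

lemma coherence_nonneg {M N : ℕ} (A : Matrix (Fin M) (Fin N) ℂ) :
    0 ≤ coherence A := by
  unfold coherence
  rcases Set.eq_empty_or_nonempty
      {r : ℝ | ∃ j k, j ≠ k ∧ r = ‖(Aᴴ * A) j k‖ / (colNorm A j * colNorm A k)} with h | ⟨r, hr⟩
  · rw [h, Real.sSup_empty]
  · refine le_trans ?_ (le_csSup (coherence_set_bddAbove A) hr)
    obtain ⟨j, k, -, rfl⟩ := hr
    exact div_nonneg (norm_nonneg _) (mul_nonneg (Real.sqrt_nonneg _) (Real.sqrt_nonneg _))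

lemma offdiag_le {M N : ℕ} (A : Matrix (Fin M) (Fin N) ℂ)
    (hcol : ∀ j, colNorm A j = 1) {j k : Fin N} (h : j ≠ k) :
    ‖(Aᴴ * A) j k‖ ≤ coherence A := by
  have h2 : ‖(Aᴴ * A) j k‖ = ‖(Aᴴ * A) j k‖ / (colNorm A j * colNorm A k) := by
    rw [hcol j, hcol k, one_mul, div_one]
  rw [h2]
  exact le_csSup (coherence_set_bddAbove A) ⟨j, k, h, rfl⟩

lemma diag_one {M N : ℕ} (A : Matrix (Fin M) (Fin N) ℂ)
    (hcol : ∀ j, colNorm A j = 1) (j : Fin N) : (Aᴴ * A) j j = 1 := by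
  have h0 : 0 ≤ ∑ i, ‖A i j‖ ^ 2 := Finset.sum_nonneg fun i _ => sq_nonneg _
  have h1 : (∑ i, ‖A i j‖ ^ 2) = 1 := by
    have hc := hcol j
    unfold colNorm at hc
    nlinarith [Real.sq_sqrt h0, Real.sqrt_nonneg (∑ i, ‖A i j‖ ^ 2)]
  have h2 : (Aᴴ * A) j j = ((∑ i, ‖A i j‖ ^ 2 : ℝ) : ℂ) := by
    rw [Matrix.mul_apply]
    push_cast
    refine Finset.sum_congr rfl fun i _ => ?_
    rw [Matrix.conjTranspose_apply]
    exact RCLike.conj_mul (A i j)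
  rw [h2, h1]; norm_num


/-- Theorem 2.1: one-step error estimate for nonlinear IHT via coherence. -/
theorem nonlinear_IHT_coherence_step {M N : ℕ} (s : ℕ)
    (Φ : (Fin N → ℂ) → (Fin M → ℂ))
    (x : Fin N → ℂ) (hx : sparse s x)
    (ε y : Fin M → ℂ) (hy : y = Φ x + ε)
    (Φlin : ℕ → Matrix (Fin M) (Fin N) ℂ)
    (hcol : ∀ n j, colNorm (Φlin n) j = 1)
    (μ0 : ℝ) (hμ : ∀ n, coherence (Φlin n) ≤ μ0)
    (hμ0 : μ0 < 1 / (3 * (s : ℝ) + 1))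
    (xseq : ℕ → Fin N → ℂ)
    (hit : ∀ n, IsHardThreshold s
      (xseq n + (Φlin n)ᴴ.mulVec (y - (Φlin n).mulVec (xseq n))) (xseq (n + 1))) :
    ∀ n : ℕ,
      l1 (xseq (n + 1) - x) ≤
        μ0 * (3 * (s : ℝ) + 1) * l1 (xseq n - x) +
          (3 * (s : ℝ) + 1) *
            linf ((Φlin n)ᴴ.mulVec (Φ x - (Φlin n).mulVec x + ε)) := by
  intro n
  classical
  set A := Φlin n with hA
  set e := Φ x - A.mulVec x + ε with he
  set u := xseq n with hu
  set z := u + Aᴴ.mulVec (y - A.mulVec u) with hz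
  set w := Aᴴ.mulVec e with hw
  obtain ⟨I, hI, hlarge, hvz, hv0⟩ := hit n
  set v := xseq (n + 1) with hv
  have hμ0' : 0 ≤ μ0 := le_trans (coherence_nonneg A) (hμ n)
  have hl1 : 0 ≤ l1 (u - x) := Finset.sum_nonneg fun i _ => norm_nonneg _
  have hlinf : 0 ≤ linf w := Real.iSup_nonneg fun i => norm_nonneg _
  set β := μ0 * l1 (u - x) + linf w with hβ
  have hβ0 : 0 ≤ β := add_nonneg (mul_nonneg hμ0' hl1) hlinf
  have hye : y = A.mulVec x + e := by rw [hy, he]; abel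
  have hzx : ∀ i, z i - x i =
      (∑ j ∈ Finset.univ.erase i, (Aᴴ * A) i j * (x j - u j)) + w i := by
    intro i
    have h1 : z = u + (Aᴴ * A).mulVec (x - u) + w := by
      rw [hz, hye]
      have h2 : A.mulVec x + e - A.mulVec u = A.mulVec (x - u) + e := by
        rw [Matrix.mulVec_sub]; abel
      rw [h2, Matrix.mulVec_add, Matrix.mulVec_mulVec, hw]
      abel
    rw [h1]
    simp only [Pi.add_apply]
    have h3 : ((Aᴴ * A).mulVec (x - u)) i = ∑ j, (Aᴴ * A) i j * (x j - u j) := by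
      simp [Matrix.mulVec, dotProduct]
    rw [h3, ← Finset.add_sum_erase _ _ (Finset.mem_univ i), diag_one A (hcol n) i, one_mul]
    ring
  have key : ∀ i, ‖z i - x i‖ ≤ β := by
    intro i
    rw [hzx i]
    refine le_trans (norm_add_le _ _) (add_le_add ?_ ?_)
    · calc ‖∑ j ∈ Finset.univ.erase i, (Aᴴ * A) i j * (x j - u j)‖
          ≤ ∑ j ∈ Finset.univ.erase i, ‖(Aᴴ * A) i j * (x j - u j)‖ := norm_sum_le _ _
        _ ≤ ∑ j ∈ Finset.univ.erase i, μ0 * ‖(u - x) j‖ := by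
            refine Finset.sum_le_sum fun j hj => ?_
            have hne : i ≠ j := (Finset.mem_erase.mp hj).1.symm
            rw [norm_mul]
            have h4 : ‖x j - u j‖ = ‖(u - x) j‖ := by
              rw [Pi.sub_apply, norm_sub_rev]
            rw [h4]
            exact mul_le_mul_of_nonneg_right
              (le_trans (offdiag_le A (hcol n) hne) (hμ n)) (norm_nonneg _)
        _ ≤ μ0 * l1 (u - x) := by
            rw [← Finset.mul_sum]
            refine mul_le_mul_of_nonneg_left ?_ hμ0'
            exact Finset.sum_le_sum_of_subset_of_nonneg
              (Finset.subset_univ _) (fun j _ _ => norm_nonneg _)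
    · unfold linf
      exact le_ciSup (Set.Finite.bddAbove (Set.finite_range fun j => ‖w j‖)) i
  have hvsplit : l1 (v - x) = (∑ i ∈ I, ‖z i - x i‖) + ∑ i ∈ Iᶜ, ‖x i‖ := by
    unfold l1
    rw [← Finset.sum_add_sum_compl I]
    congr 1
    · exact Finset.sum_congr rfl fun i hi => by rw [Pi.sub_apply, hvz i hi]
    · refine Finset.sum_congr rfl fun i hi => ?_
      rw [Pi.sub_apply, hv0 i (Finset.mem_compl.mp hi), zero_sub, norm_neg]
  have h1 : ∑ i ∈ I, ‖z i - x i‖ ≤ (s : ℝ) * β := by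
    calc ∑ i ∈ I, ‖z i - x i‖ ≤ ∑ _i ∈ I, β := Finset.sum_le_sum fun i _ => key i
      _ = (s : ℝ) * β := by rw [Finset.sum_const, hI, nsmul_eq_mul]
  set S := Finset.univ.filter (fun i => x i ≠ 0) with hS
  have hScard : S.card ≤ s := by
    have hset : {i | x i ≠ 0} = ↑S := by ext i; simp [hS]
    rwa [sparse, hset, Set.ncard_coe_finset] at hx
  have h2 : ∑ i ∈ Iᶜ, ‖x i‖ ≤ (s : ℝ) * (2 * β) := by
    set T := Iᶜ.filter (fun i => x i ≠ 0) with hT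
    have heq : ∑ i ∈ Iᶜ, ‖x i‖ = ∑ i ∈ T, ‖x i‖ := by
      refine (Finset.sum_filter_of_ne fun i _ h => ?_).symm
      exact fun h0 => h (by rw [h0, norm_zero])
    rw [heq]
    rcases T.eq_empty_or_nonempty with hTe | ⟨i0, hi0⟩
    · rw [hTe, Finset.sum_empty]; positivity
    · obtain ⟨k, hkI, hk0⟩ : ∃ k ∈ I, x k = 0 := by
        by_contra hcon
        push_neg at hcon
        have hIS : I ⊆ S := fun k hk => by
          simp only [hS, Finset.mem_filter, Finset.mem_univ, true_and]
          exact hcon k hk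
        have hSI : I = S := Finset.eq_of_subset_of_card_le hIS (hScard.trans hI.ge)
        have hi0' := Finset.mem_filter.mp hi0
        have : i0 ∈ S := by
          simp only [hS, Finset.mem_filter, Finset.mem_univ, true_and]
          exact hi0'.2
        rw [← hSI] at this
        exact (Finset.mem_compl.mp hi0'.1) this
      have hterm : ∀ i ∈ T, ‖x i‖ ≤ 2 * β := by
        intro i hi
        have hi' := Finset.mem_filter.mp hi
        have hzk : ‖z i‖ ≤ ‖z k‖ := hlarge k hkI i (Finset.mem_compl.mp hi'.1)
        have hzk2 : ‖z k‖ ≤ β := by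
          have := key k
          rwa [hk0, sub_zero] at this
        calc ‖x i‖ = ‖(x i - z i) + z i‖ := by ring_nf
          _ ≤ ‖x i - z i‖ + ‖z i‖ := norm_add_le _ _
          _ ≤ β + β := add_le_add (by rw [norm_sub_rev]; exact key i) (hzk.trans hzk2)
          _ = 2 * β := by ring
      calc ∑ i ∈ T, ‖x i‖ ≤ ∑ _i ∈ T, 2 * β := Finset.sum_le_sum hterm
        _ = (T.card : ℝ) * (2 * β) := by rw [Finset.sum_const, nsmul_eq_mul]
        _ ≤ (s : ℝ) * (2 * β) := by
            refine mul_le_mul_of_nonneg_right ?_ (by positivity)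
            have hTS : T ⊆ S := fun i hi => by
              have hi' := Finset.mem_filter.mp hi
              simp only [hS, Finset.mem_filter, Finset.mem_univ, true_and]
              exact hi'.2
            exact_mod_cast (Finset.card_le_card hTS).trans hScard
  have hfinal : l1 (v - x) ≤ (3 * (s : ℝ) + 1) * β := by
    rw [hvsplit]
    nlinarith [h1, h2, hβ0]
  calc l1 (v - x) ≤ (3 * (s : ℝ) + 1) * β := hfinal
    _ = μ0 * (3 * (s : ℝ) + 1) * l1 (u - x) + (3 * (s : ℝ) + 1) * linf w := by
        rw [hβ]; ring


end
end

section
/- Let Φ : ℂ^N → ℂ^M be a map, let x ∈ ℂ^N be s-sparse, let ε ∈ ℂ^M, and set y = Φ(x) + ε. For each n ≥ 0 let Φ_{x_n} be an M×N matrix with unit ℓ²-norm columns and μ(Φ_{x_n}) ≤ μ₀, and define the iterates x_{n+1} = H_s( x_n + Φ_{x_n}^* ( y − Φ_{x_n} x_n ) ). Suppose ρ = μ₀(3s+1) < 1 and there exists a constant M' such that ‖Φ_{x_n}^* e_n‖_∞ ≤ M' for all n, where e_n = Φ(x) − Φ_{x_n} x + ε. Then for all n ≥ 1, ‖x_n −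 x‖₁ ≤ ρⁿ ‖x₀ − x‖₁ + M'(3s+1)/(1−ρ). -/
/-!
With unit-norm columns the Gram matrix `Φ_{x_n}^* Φ_{x_n}` has unit diagonal and off-diagonal
entries bounded by `μ₀`, so the gradient step `x_n + Φ_{x_n}^* (y - Φ_{x_n} x_n)` lies within
`μ₀ ‖x_n - x‖₁ + M'` of `x` in every coordinate. Hard thresholding to `s` entries against an
`s`-sparse target inflates an entrywise error `B` to at most `3sB` in `ℓ¹`, which gives the
contraction `‖x_{n+1} - x‖₁ ≤ ρ ‖x_n - x‖₁ + M'(3s+1)`; iterating it sums a geometric series.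
-/

open Matrix Finset Filter

noncomputable section

lemma coherence_nonneg_s1 {m n : Type*} [Fintype m] [Fintype n] (A : Matrix m n ℂ) :
    0 ≤ coherence A := by
  refine Real.sSup_nonneg ?_
  rintro r ⟨j, k, -, rfl⟩
  unfold colNorm
  positivity

lemma norm_gram_apply_le_coherence {m n : Type*} [Fintype m] [Fintype n] {A : Matrix m n ℂ}
    (hcol : ∀ j, colNorm A j = 1) {j k : n} (hjk : j ≠ k) :
    ‖(Aᴴ * A) j k‖ ≤ coherence A := by
  have hbdd : BddAbove
      {r : ℝ | ∃ j k, j ≠ k ∧ r = ‖(Aᴴ * A) j k‖ / (colNorm A j * colNorm A k)} := by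
    refine (Set.finite_range fun p : n × n =>
      ‖(Aᴴ * A) p.1 p.2‖ / (colNorm A p.1 * colNorm A p.2)).subset ?_ |>.bddAbove
    rintro _ ⟨a, b, -, rfl⟩
    exact ⟨(a, b), rfl⟩
  exact le_csSup hbdd ⟨j, k, hjk, by simp [hcol]⟩

lemma gram_apply_self_eq_one {m n : Type*} [Fintype m] {A : Matrix m n ℂ}
    (hcol : ∀ j, colNorm A j = 1) (j : n) : (Aᴴ * A) j j = 1 := by
  have hsq : ∑ i, ‖A i j‖ ^ 2 = 1 := by simpa [colNorm] using hcol j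
  rw [mul_apply]
  simp_rw [conjTranspose_apply, Complex.star_def, Complex.conj_mul']
  exact_mod_cast hsq

lemma norm_le_linf {n : Type*} [Fintype n] (v : n → ℂ) (i : n) : ‖v i‖ ≤ linf v :=
  le_ciSup (Set.finite_range fun i => ‖v i‖).bddAbove i

lemma linf_nonneg {n : Type*} [Fintype n] (v : n → ℂ) : 0 ≤ linf v :=
  Real.iSup_nonneg fun _ => norm_nonneg _

lemma l1_nonneg {n : Type*} [Fintype n] (v : n → ℂ) : 0 ≤ l1 v :=
  Finset.sum_nonneg fun _ _ => norm_nonneg _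

lemma norm_sub_gram_mulVec_apply_le {m n : Type*} [Fintype m] [Fintype n] {A : Matrix m n ℂ}
    (hcol : ∀ j, colNorm A j = 1) (h : n → ℂ) (i : n) :
    ‖h i - ((Aᴴ * A) *ᵥ h) i‖ ≤ coherence A * l1 h := by
  classical
  have hsplit : ((Aᴴ * A) *ᵥ h) i = h i + ∑ j ∈ univ.erase i, (Aᴴ * A) i j * h j := by
    rw [mulVec, dotProduct, ← add_sum_erase _ _ (mem_univ i), gram_apply_self_eq_one hcol,
      one_mul]
  calc ‖h i - ((Aᴴ * A) *ᵥ h) i‖ = ‖∑ j ∈ univ.erase i, (Aᴴ * A) i j * h j‖ := by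
        rw [hsplit, sub_add_cancel_left, norm_neg]
    _ ≤ ∑ j ∈ univ.erase i, coherence A * ‖h j‖ := by
        refine (norm_sum_le _ _).trans (sum_le_sum fun j hj => ?_)
        rw [norm_mul]
        gcongr
        exact norm_gram_apply_le_coherence hcol (ne_of_mem_erase hj).symm
    _ ≤ coherence A * l1 h := by
        rw [← mul_sum]
        exact mul_le_mul_of_nonneg_left
          (sum_le_sum_of_subset_of_nonneg (subset_univ _) fun _ _ _ => norm_nonneg _)
          (coherence_nonneg_s1 A)

/-- An index of the support of `x` discarded by thresholding is beaten by a kept index outside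
that support, where `‖z‖ ≤ B`; so each discarded entry of `x` is at most `2B`. -/
lemma l1_sub_le_of_isHardThreshold {n : Type*} [Fintype n] {s : ℕ} {x z w : n → ℂ}
    (hx : sparse s x) (hw : IsHardThreshold s z w) {B : ℝ} (hB0 : 0 ≤ B)
    (hB : ∀ i, ‖z i - x i‖ ≤ B) :
    l1 (w - x) ≤ 3 * s * B := by
  classical
  obtain ⟨I, hI, hlarge, hwI, hwIc⟩ := hw
  set S := univ.filter fun i => x i ≠ 0
  have hS : S.card ≤ s := by
    rwa [sparse, show {i | x i ≠ 0} = (S : Set n) by ext; simp [S], Set.ncard_coe_finset] at hx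
  have on_I : ∑ i ∈ I, ‖w i - x i‖ ≤ s * B := by
    calc ∑ i ∈ I, ‖w i - x i‖ ≤ I.card • B :=
          sum_le_card_nsmul _ _ _ fun i hi => hwI i hi ▸ hB i
      _ = s * B := by rw [hI, nsmul_eq_mul]
  have off_I_eq : ∑ i ∈ Iᶜ, ‖w i - x i‖ = ∑ i ∈ S \ I, ‖x i‖ := by
    rw [← sum_subset (fun i hi => mem_compl.2 (mem_sdiff.1 hi).2)]
    · exact sum_congr rfl fun i hi => by rw [hwIc i (mem_sdiff.1 hi).2, zero_sub, norm_neg]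
    · intro i hi hiS
      have hxi : x i = 0 := by simpa [S, mem_compl.1 hi] using hiS
      simp [hxi, hwIc i (mem_compl.1 hi)]
  have off_I : ∑ i ∈ S \ I, ‖x i‖ ≤ s * (2 * B) := by
    have hsmall : ∀ i ∈ S \ I, ‖x i‖ ≤ 2 * B := by
      intro i hi
      obtain ⟨hiS, hiI⟩ := mem_sdiff.1 hi
      obtain ⟨j, hjI, hjS⟩ : ∃ j ∈ I, j ∉ S := by
        by_contra! hIS
        exact hiI (eq_of_subset_of_card_le hIS (hI ▸ hS) ▸ hiS)
      have hxj : x j = 0 := by simpa [S] using hjS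
      have hzj : ‖z j‖ ≤ B := by simpa [hxj] using hB j
      calc ‖x i‖ ≤ ‖z i‖ + ‖z i - x i‖ := norm_le_norm_add_norm_sub _ _
        _ ≤ B + B := add_le_add ((hlarge j hjI i hiI).trans hzj) (hB i)
        _ = 2 * B := by ring
    calc ∑ i ∈ S \ I, ‖x i‖ ≤ (S \ I).card • (2 * B) := sum_le_card_nsmul _ _ _ hsmall
      _ ≤ s * (2 * B) := by
        rw [nsmul_eq_mul]
        gcongr
        exact_mod_cast (card_le_card sdiff_subset).trans hS
  calc l1 (w - x) = ∑ i ∈ I, ‖w i - x i‖ + ∑ i ∈ Iᶜ, ‖w i - x i‖ :=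
        (sum_add_sum_compl I _).symm
    _ ≤ 3 * s * B := by linarith

lemma l1_sub_le_of_isHardThreshold_gradientStep {m n : Type*} [Fintype m] [Fintype n] {s : ℕ}
    {A : Matrix m n ℂ} (hcol : ∀ j, colNorm A j = 1) {x u w : n → ℂ} (hx : sparse s x)
    {y e : m → ℂ} (hy : y = A *ᵥ x + e) (hw : IsHardThreshold s (u + Aᴴ *ᵥ (y - A *ᵥ u)) w) :
    l1 (w - x) ≤ 3 * s * (coherence A * l1 (u - x) + linf (Aᴴ *ᵥ e)) := by
  have hres : u + Aᴴ *ᵥ (y - A *ᵥ u) - x = (u - x) - (Aᴴ * A) *ᵥ (u - x) + Aᴴ *ᵥ e := by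
    rw [hy, ← mulVec_mulVec, mulVec_sub, mulVec_add, mulVec_sub, mulVec_sub]
    abel
  refine l1_sub_le_of_isHardThreshold hx hw
    (add_nonneg (mul_nonneg (coherence_nonneg_s1 A) (l1_nonneg _)) (linf_nonneg _)) fun i => ?_
  calc ‖(u + Aᴴ *ᵥ (y - A *ᵥ u)) i - x i‖
      = ‖((u - x) i - ((Aᴴ * A) *ᵥ (u - x)) i) + (Aᴴ *ᵥ e) i‖ := by
        rw [← Pi.sub_apply, hres, Pi.add_apply, Pi.sub_apply]
    _ ≤ coherence A * l1 (u - x) + linf (Aᴴ *ᵥ e) :=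
        (norm_add_le _ _).trans
          (add_le_add (norm_sub_gram_mulVec_apply_le hcol _ i) (norm_le_linf _ i))

lemma le_pow_mul_add_div_of_le_mul_add {a : ℕ → ℝ} {ρ C : ℝ} (hρ0 : 0 ≤ ρ) (hρ1 : ρ < 1)
    (hC : 0 ≤ C) (h : ∀ n, a (n + 1) ≤ ρ * a n + C) (n : ℕ) :
    a n ≤ ρ ^ n * a 0 + C / (1 - ρ) := by
  induction n with
  | zero => simpa using div_nonneg hC (by linarith)
  | succ n ih =>
    calc a (n + 1) ≤ ρ * (ρ ^ n * a 0 + C / (1 - ρ)) + C := by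
          linarith [h n, mul_le_mul_of_nonneg_left ih hρ0]
      _ = ρ ^ (n + 1) * a 0 + C / (1 - ρ) := by
          field_simp [sub_ne_zero.2 hρ1.ne']
          ring

/-- Corollary 2.2: geometric convergence of nonlinear IHT with bounded error terms. -/
theorem nonlinear_IHT_coherence_geometric {M N : ℕ} (s : ℕ)
    (Φ : (Fin N → ℂ) → (Fin M → ℂ))
    (x : Fin N → ℂ) (hx : sparse s x)
    (ε y : Fin M → ℂ) (hy : y = Φ x + ε)
    (Φlin : ℕ → Matrix (Fin M) (Fin N) ℂ)
    (hcol : ∀ n j, colNorm (Φlin n) j = 1)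
    (μ0 : ℝ) (hμ : ∀ n, coherence (Φlin n) ≤ μ0)
    (xseq : ℕ → Fin N → ℂ)
    (hit : ∀ n, IsHardThreshold s
      (xseq n + (Φlin n)ᴴ.mulVec (y - (Φlin n).mulVec (xseq n))) (xseq (n + 1)))
    (ρ : ℝ) (hρ : ρ = μ0 * (3 * (s : ℝ) + 1)) (hρ1 : ρ < 1)
    (M' : ℝ)
    (hM' : ∀ n, linf ((Φlin n)ᴴ.mulVec (Φ x - (Φlin n).mulVec x + ε)) ≤ M') :
    ∀ n : ℕ, 1 ≤ n →
      l1 (xseq n - x) ≤ ρ ^ n * l1 (xseq 0 - x) + M' * (3 * (s : ℝ) + 1) / (1 - ρ) := by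
  have hμ0 : 0 ≤ μ0 := (coherence_nonneg_s1 _).trans (hμ 0)
  have hM'0 : 0 ≤ M' := (linf_nonneg _).trans (hM' 0)
  have hρ0 : 0 ≤ ρ := hρ ▸ by positivity
  have hstep : ∀ n, l1 (xseq (n + 1) - x) ≤ ρ * l1 (xseq n - x) + M' * (3 * s + 1) := by
    intro n
    have hy' : y = Φlin n *ᵥ x + (Φ x - Φlin n *ᵥ x + ε) := by rw [hy]; abel
    calc l1 (xseq (n + 1) - x)
        ≤ 3 * s * (coherence (Φlin n) * l1 (xseq n - x)
            + linf ((Φlin n)ᴴ *ᵥ (Φ x - Φlin n *ᵥ x + ε))) :=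
          l1_sub_le_of_isHardThreshold_gradientStep (hcol n) hx hy' (hit n)
      _ ≤ 3 * s * (μ0 * l1 (xseq n - x) + M') := by
          gcongr 3 * s * (?_ + ?_)
          exacts [mul_le_mul_of_nonneg_right (hμ n) (l1_nonneg _), hM' n]
      _ ≤ ρ * l1 (xseq n - x) + M' * (3 * s + 1) := by
          rw [hρ]; nlinarith [mul_nonneg hμ0 (l1_nonneg (xseq n - x))]
  have hC : 0 ≤ M' * (3 * (s : ℝ) + 1) := by positivity
  intro n _
  exact le_pow_mul_add_div_of_le_mul_add (a := fun n => l1 (xseq n - x)) hρ0 hρ1 hC hstep n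
end
end

section
/- Let x ∈ ℂ^N be s-sparse with support I^*, and let z ∈ ℂ^N. Let I be an index set of size s such that |z_i| ≥ |z_j| for all i ∈ I, j ∉ I, let I₊ be an index set of size s+1 with I ⊆ I₊ and |z_i| ≥ |z_j| for all i ∈ I₊, j ∉ I₊, and let x' ∈ ℂ^N be the vector equal to z on I and zero outside I. Then for any index set S with I₊ ∪ I^* ⊆ S, the inequality ‖x' − x‖₁ ≤ (3s+1) · max_{i ∈ S} |z_i − x_i| holds. -/
open Matrix Finset Filter

noncomputable section

/-- Lemma A.2: ℓ¹ bound for the hard-thresholded vector. -/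
theorem l1_hardThreshold_bound {N : ℕ} (s : ℕ) (x z : Fin N → ℂ)
    (hx : sparse s x)
    (Istar : Finset (Fin N)) (hIstar : ∀ i, i ∈ Istar ↔ x i ≠ 0)
    (I Iplus : Finset (Fin N))
    (hIcard : I.card = s)
    (hI : ∀ i ∈ I, ∀ j ∉ I, ‖z j‖ ≤ ‖z i‖)
    (hIpluscard : Iplus.card = s + 1) (hsub : I ⊆ Iplus)
    (hIplus : ∀ i ∈ Iplus, ∀ j ∉ Iplus, ‖z j‖ ≤ ‖z i‖)
    (x' : Fin N → ℂ)
    (hx'I : ∀ i ∈ I, x' i = z i) (hx'0 : ∀ i ∉ I, x' i = 0)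
    (S : Finset (Fin N)) (hS : Iplus ∪ Istar ⊆ S) :
    l1 (x' - x) ≤ (3 * (s : ℝ) + 1) * ⨆ i ∈ S, ‖z i - x i‖ := by
  set M := ⨆ i ∈ S, ‖z i - x i‖ with hM
  have hM0 : 0 ≤ M :=
    Real.iSup_nonneg fun i => Real.iSup_nonneg fun _ => norm_nonneg _
  have hMle : ∀ i ∈ S, ‖z i - x i‖ ≤ M := by
    intro i hi
    refine le_trans ?_ (le_ciSup (Set.Finite.bddAbove (Set.finite_range _)) i)
    rw [ciSup_pos hi]
  have hIstarcard : Istar.card ≤ s := by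
    have hset : (↑Istar : Set (Fin N)) = {i | x i ≠ 0} := by
      ext i; simp [hIstar i]
    have := hx
    rw [sparse, ← hset, Set.ncard_coe_finset] at this
    exact this
  have hxz : ∀ i ∉ Istar, x i = 0 := fun i hi => by
    by_contra h; exact hi ((hIstar i).mpr h)
  have hzM : ∀ i ∈ Istar \ I, ‖z i‖ ≤ M := by
    intro i hi
    obtain ⟨hiStar, hiI⟩ := Finset.mem_sdiff.mp hi
    have hne : (I \ Istar).Nonempty := by
      rw [Finset.sdiff_nonempty]
      intro hsub'
      have heq : I = Istar :=
        Finset.eq_of_subset_of_card_le hsub' (by rw [hIcard]; exact hIstarcard)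
      exact hiI (heq ▸ hiStar)
    obtain ⟨j, hj⟩ := hne
    obtain ⟨hjI, hjStar⟩ := Finset.mem_sdiff.mp hj
    have h1 : ‖z i‖ ≤ ‖z j‖ := hI j hjI i hiI
    have h2 : ‖z j‖ = ‖z j - x j‖ := by rw [hxz j hjStar, sub_zero]
    have h3 : ‖z j - x j‖ ≤ M :=
      hMle j (hS (Finset.mem_union_left _ (hsub hjI)))
    linarith
  have key : l1 (x' - x) = ∑ i ∈ I ∪ Istar, ‖x' i - x i‖ := by
    rw [l1]
    refine (Finset.sum_subset (Finset.subset_univ _) ?_).symm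
    intro i _ hi
    rw [Finset.mem_union, not_or] at hi
    simp [hx'0 i hi.1, hxz i hi.2]
  have split : ∑ i ∈ I ∪ Istar, ‖x' i - x i‖ =
      ∑ i ∈ I, ‖x' i - x i‖ + ∑ i ∈ Istar \ I, ‖x' i - x i‖ := by
    rw [← Finset.union_sdiff_self_eq_union, Finset.sum_union Finset.disjoint_sdiff]
  have b1 : ∑ i ∈ I, ‖x' i - x i‖ ≤ (s : ℝ) * M := by
    calc ∑ i ∈ I, ‖x' i - x i‖ ≤ ∑ _i ∈ I, M := by
          refine Finset.sum_le_sum fun i hi => ?_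
          rw [hx'I i hi]
          exact hMle i (hS (Finset.mem_union_left _ (hsub hi)))
      _ = (s : ℝ) * M := by rw [Finset.sum_const, hIcard, nsmul_eq_mul]
  have b2 : ∑ i ∈ Istar \ I, ‖x' i - x i‖ ≤ 2 * (s : ℝ) * M := by
    calc ∑ i ∈ Istar \ I, ‖x' i - x i‖ ≤ ∑ _i ∈ Istar \ I, (M + M) := by
          refine Finset.sum_le_sum fun i hi => ?_
          obtain ⟨hiStar, hiI⟩ := Finset.mem_sdiff.mp hi
          rw [hx'0 i hiI, zero_sub, norm_neg]
          have h1 : ‖x i‖ ≤ ‖z i‖ + ‖z i - x i‖ := by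
            have he : ‖x i‖ = ‖z i - (z i - x i)‖ := by congr 1; ring
            rw [he]
            exact norm_sub_le _ _
          have h2 : ‖z i‖ ≤ M := hzM i hi
          have h3 : ‖z i - x i‖ ≤ M :=
            hMle i (hS (Finset.mem_union_right _ hiStar))
          linarith
      _ = ((Istar \ I).card : ℝ) * (M + M) := by
          rw [Finset.sum_const, nsmul_eq_mul]
      _ ≤ (s : ℝ) * (M + M) := by
          have hc : ((Istar \ I).card : ℝ) ≤ (s : ℝ) := by
            exact_mod_cast le_trans (Finset.card_le_card (Finset.sdiff_subset)) hIstarcard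
          nlinarith
      _ = 2 * (s : ℝ) * M := by ring
  rw [key, split]
  nlinarith

end
end

section
/- Let A be an L×N complex matrix satisfying the restricted isometry property of order 2s with constant δ₂ₛᴬ, let V be an N×N diagonal matrix with at most s nonzero diagonal entries, let G be an N×N complex matrix, let M ≥ 1, and set g = ‖VG‖₂ (spectral norm). Assume Σ_{j=1}^M gʲ ≤ 1. Then for every s-sparse x ∈ ℂ^N, (1 − δ₂ₛᴬ)(1 − Σ_{j=1}^M gʲ)² ‖x‖₂² ≤ ‖ A ( Σ_{j=0}^M (VG)ʲ ) x ‖₂² ≤ (1 + δ₂ₛᴬ)(1 + Σ_{j=1}^M gʲ)² ‖x‖₂². -/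
/-!
With `P = diagonal v * G`, the Born series is `1 + C` with `C = ∑_{j=1}^M P ^ j`. Every power
`P ^ j` with `j ≥ 1` starts with the factor `diagonal v`, so `C x` is supported in the support of
`v` and `x + C x` is `2s`-sparse: the RIP bounds apply to it. Since the spectral norm is
submultiplicative, `‖C x‖ ≤ (∑_{j=1}^M g ^ j) ‖x‖`, and the triangle inequality gives
`(1 - ∑ g ^ j) ‖x‖ ≤ ‖x + C x‖ ≤ (1 + ∑ g ^ j) ‖x‖`.
-/

open Matrix Finset Filter

noncomputable section

theorem sparse_add {n : Type*} [Finite n] {s t : ℕ} {x y : n → ℂ} (hx : sparse s x)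
    (hy : sparse t y) : sparse (s + t) (x + y) :=
  calc (Function.support (x + y)).ncard
      ≤ (Function.support x ∪ Function.support y).ncard :=
        Set.ncard_le_ncard (Function.support_add x y)
    _ ≤ (Function.support x).ncard + (Function.support y).ncard := Set.ncard_union_le _ _
    _ ≤ s + t := add_le_add hx hy

theorem sparse_of_support_subset {n : Type*} [Finite n] {s : ℕ} {x y : n → ℂ}
    (hy : sparse s y) (hxy : Function.support x ⊆ Function.support y) : sparse s x :=
  (Set.ncard_le_ncard hxy).trans hy

theorem l2sq_eq_norm_toLp_sq {n : Type*} [Fintype n] (x : n → ℂ) :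
    l2sq x = ‖WithLp.toLp 2 x‖ ^ 2 :=
  (EuclideanSpace.norm_sq_eq _).symm

theorem norm_toLp_mulVec_le {n : Type*} [Fintype n] [DecidableEq n] (C : Matrix n n ℂ)
    (x : n → ℂ) : ‖WithLp.toLp 2 (C *ᵥ x)‖ ≤ specNorm C * ‖WithLp.toLp 2 x‖ := by
  rw [specNorm, ← Matrix.toEuclideanCLM_toLp]
  exact (Matrix.toEuclideanCLM (𝕜 := ℂ) C).le_opNorm _

theorem l2sq_add_mulVec_le_one_add_sq_mul {n : Type*} [Fintype n] [DecidableEq n]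
    {C : Matrix n n ℂ} {S : ℝ} (hC : specNorm C ≤ S) (x : n → ℂ) :
    l2sq (x + C *ᵥ x) ≤ (1 + S) ^ 2 * l2sq x := by
  have hCx : ‖WithLp.toLp 2 (C *ᵥ x)‖ ≤ S * ‖WithLp.toLp 2 x‖ :=
    (norm_toLp_mulVec_le C x).trans (by gcongr)
  rw [l2sq_eq_norm_toLp_sq, l2sq_eq_norm_toLp_sq, WithLp.toLp_add, ← mul_pow]
  gcongr
  linarith [norm_add_le (WithLp.toLp 2 x) (WithLp.toLp 2 (C *ᵥ x))]

theorem one_sub_sq_mul_l2sq_le_l2sq_add_mulVec {n : Type*} [Fintype n] [DecidableEq n]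
    {C : Matrix n n ℂ} {S : ℝ} (hC : specNorm C ≤ S) (hS : S ≤ 1) (x : n → ℂ) :
    (1 - S) ^ 2 * l2sq x ≤ l2sq (x + C *ᵥ x) := by
  have hCx : ‖WithLp.toLp 2 (C *ᵥ x)‖ ≤ S * ‖WithLp.toLp 2 x‖ :=
    (norm_toLp_mulVec_le C x).trans (by gcongr)
  rw [l2sq_eq_norm_toLp_sq, l2sq_eq_norm_toLp_sq, WithLp.toLp_add, ← mul_pow]
  have hS' : 0 ≤ 1 - S := sub_nonneg.2 hS
  gcongr
  linarith [norm_sub_le_norm_add (WithLp.toLp 2 x) (WithLp.toLp 2 (C *ᵥ x))]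

theorem norm_sum_Icc_pow_le {R : Type*} [SeminormedRing R] (a : R) (M : ℕ) :
    ‖∑ j ∈ Finset.Icc 1 M, a ^ j‖ ≤ ∑ j ∈ Finset.Icc 1 M, ‖a‖ ^ j :=
  (norm_sum_le _ _).trans <| Finset.sum_le_sum fun _ hj ↦
    norm_pow_le' a (Finset.mem_Icc.1 hj).1

theorem specNorm_sum_Icc_pow_le {n : Type*} [Fintype n] [DecidableEq n] (P : Matrix n n ℂ)
    (M : ℕ) :
    specNorm (∑ j ∈ Finset.Icc 1 M, P ^ j) ≤ ∑ j ∈ Finset.Icc 1 M, specNorm P ^ j := by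
  simpa only [specNorm, map_sum, map_pow] using
    norm_sum_Icc_pow_le (Matrix.toEuclideanCLM (𝕜 := ℂ) P) M

theorem sum_range_succ_pow_eq_one_add_sum_Icc {R : Type*} [Semiring R] (a : R) (M : ℕ) :
    ∑ j ∈ Finset.range (M + 1), a ^ j = 1 + ∑ j ∈ Finset.Icc 1 M, a ^ j := by
  rw [Nat.range_succ_eq_Icc_zero, ← Finset.insert_Icc_add_one_left_eq_Icc M.zero_le,
    Finset.sum_insert (by simp), pow_zero, zero_add]

theorem diagonal_mul_pow_mulVec_apply_eq_zero {n : Type*} [Fintype n] [DecidableEq n]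
    {v : n → ℂ} {i : n} (hvi : v i = 0) (G : Matrix n n ℂ) (x : n → ℂ) {j : ℕ}
    (hj : j ≠ 0) :
    ((Matrix.diagonal v * G) ^ j *ᵥ x) i = 0 := by
  obtain ⟨k, rfl⟩ := Nat.exists_eq_add_one_of_ne_zero hj
  rw [pow_succ', Matrix.mul_assoc, ← Matrix.mulVec_mulVec, Matrix.mulVec_diagonal, hvi, zero_mul]

theorem support_sum_Icc_pow_diagonal_mul_mulVec_subset {n : Type*} [Fintype n] [DecidableEq n]
    (v : n → ℂ) (G : Matrix n n ℂ) (M : ℕ) (x : n → ℂ) :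
    Function.support ((∑ j ∈ Finset.Icc 1 M, (Matrix.diagonal v * G) ^ j) *ᵥ x) ⊆
      Function.support v := by
  intro i hi
  contrapose! hi
  rw [Function.notMem_support] at hi ⊢
  rw [Matrix.sum_mulVec, Finset.sum_apply]
  exact Finset.sum_eq_zero fun j hj ↦
    diagonal_mul_pow_mulVec_apply_eq_zero hi G x (by grind)

theorem RIP_Mth_Born_linearization_general {L N : ℕ} (s : ℕ)
    (A : Matrix (Fin L) (Fin N) ℂ)
    (δA : ℝ) (hRIP : SatisfiesRIP A (2 * s) δA)
    (v : Fin N → ℂ) (hv : sparse s v)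
    (G : Matrix (Fin N) (Fin N) ℂ)
    (M : ℕ)
    (g : ℝ) (hg : g = specNorm (Matrix.diagonal v * G))
    (hsum : ∑ j ∈ Finset.Icc 1 M, g ^ j ≤ 1) :
    ∀ x : Fin N → ℂ, sparse s x →
      (1 - δA) * (1 - ∑ j ∈ Finset.Icc 1 M, g ^ j) ^ 2 * l2sq x ≤
        l2sq ((A * ∑ j ∈ Finset.range (M + 1),
          (Matrix.diagonal v * G) ^ j).mulVec x) ∧
      l2sq ((A * ∑ j ∈ Finset.range (M + 1),
          (Matrix.diagonal v * G) ^ j).mulVec x) ≤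
        (1 + δA) * (1 + ∑ j ∈ Finset.Icc 1 M, g ^ j) ^ 2 * l2sq x := by
  intro x hx
  obtain ⟨hδ0, hδ1, hRIP⟩ := hRIP
  set C := ∑ j ∈ Finset.Icc 1 M, (Matrix.diagonal v * G) ^ j
  have hC : specNorm C ≤ ∑ j ∈ Finset.Icc 1 M, g ^ j := hg ▸ specNorm_sum_Icc_pow_le _ M
  have hAx : (A * ∑ j ∈ Finset.range (M + 1), (Matrix.diagonal v * G) ^ j) *ᵥ x =
      A *ᵥ (x + C *ᵥ x) := by
    rw [sum_range_succ_pow_eq_one_add_sum_Icc, ← Matrix.mulVec_mulVec, Matrix.add_mulVec,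
      Matrix.one_mulVec]
  have hsparse : sparse (2 * s) (x + C *ᵥ x) := two_mul s ▸
    sparse_add hx (sparse_of_support_subset hv (support_sum_Icc_pow_diagonal_mul_mulVec_subset ..))
  obtain ⟨hlower, hupper⟩ := hRIP _ hsparse
  rw [hAx, mul_assoc, mul_assoc]
  exact ⟨(mul_le_mul_of_nonneg_left (one_sub_sq_mul_l2sq_le_l2sq_add_mulVec hC hsum x)
      (by linarith)).trans hlower,
    hupper.trans (mul_le_mul_of_nonneg_left (l2sq_add_mulVec_le_one_add_sq_mul hC x)
      (by linarith))⟩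

/-- Equation (B.7): RIP-type bounds for the M-th order Born linearization. -/
theorem RIP_Mth_Born_linearization {L N : ℕ} (s : ℕ)
    (A : Matrix (Fin L) (Fin N) ℂ)
    (δA : ℝ) (hRIP : SatisfiesRIP A (2 * s) δA)
    (v : Fin N → ℂ) (hv : sparse s v)
    (G : Matrix (Fin N) (Fin N) ℂ)
    (M : ℕ) (hM : 1 ≤ M)
    (g : ℝ) (hg : g = specNorm (Matrix.diagonal v * G))
    (hsum : ∑ j ∈ Finset.Icc 1 M, g ^ j ≤ 1) :
    ∀ x : Fin N → ℂ, sparse s x →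
      (1 - δA) * (1 - ∑ j ∈ Finset.Icc 1 M, g ^ j) ^ 2 * l2sq x ≤
        l2sq ((A * ∑ j ∈ Finset.range (M + 1),
          (Matrix.diagonal v * G) ^ j).mulVec x) ∧
      l2sq ((A * ∑ j ∈ Finset.range (M + 1),
          (Matrix.diagonal v * G) ^ j).mulVec x) ≤
        (1 + δA) * (1 + ∑ j ∈ Finset.Icc 1 M, g ^ j) ^ 2 * l2sq x :=
  RIP_Mth_Born_linearization_general s A δA hRIP v hv G M g hg hsum

end
end
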